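/- arXiv:2505.20353 — 2 statements merged into one kernel-verified Lean document; each statement's English description precedes it below -/
import Mathlib

section
/- Let N be a positive integer and let v : ℝ^N → ℝ (with the Euclidean norm on ℝ^N) be twice continuously differentiable, with the operator norm of its second Fréchet derivative bounded by a constant C ≥ 0 at every point. Fix b, x ∈ ℝ^N with ‖x − b‖ ≤ δ. For each coordinate i, define the singleton interaction I(i) = v(update of b at coordinate i to x_i) − v(b). Then |v(x) − v(b) − Σ_{i=1}^N I(i)| ≤ C·δ². -/
/-!
Both `v x - v b` and each singleton increment `v (update b i (x i)) - v b` are within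
`C / 2 · ‖displacement‖²` of the linear term `Dv(b)(displacement)`: a derivative that is
`C`-Lipschitz gives the second-order Taylor bound. The linear terms cancel because
`x - b = ∑ i, single i (x i - b i)`, and by Pythagoras the singleton displacements have squared
norms summing to `‖x - b‖²`, so the total error is at most `C ‖x - b‖² ≤ C δ²`.
-/

section Taylor

variable {E F : Type*} [NormedAddCommGroup E] [NormedSpace ℝ E]
  [NormedAddCommGroup F] [NormedSpace ℝ F] {f : E → F} {C : ℝ}

theorem norm_fderiv_sub_fderiv_le_of_norm_iteratedFDeriv_two_le (hf : ContDiff ℝ 2 f)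
    (hC : ∀ z, ‖iteratedFDeriv ℝ 2 f z‖ ≤ C) (y z : E) :
    ‖fderiv ℝ f y - fderiv ℝ f z‖ ≤ C * ‖y - z‖ := by
  have hf' : Differentiable ℝ (fderiv ℝ f) :=
    (hf.fderiv_right (m := 1) le_rfl).differentiable one_ne_zero
  refine convex_univ.norm_image_sub_le_of_norm_fderiv_le (fun w _ ↦ hf' w)
    (fun w _ ↦ ?_) (Set.mem_univ z) (Set.mem_univ y)
  calc ‖fderiv ℝ (fderiv ℝ f) w‖
      = ‖iteratedFDeriv ℝ 2 f w‖ := by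
        rw [← norm_iteratedFDeriv_fderiv, ← norm_iteratedFDeriv_fderiv, norm_iteratedFDeriv_zero]
    _ ≤ C := hC w

theorem norm_sub_sub_fderiv_le_of_lipschitz_fderiv (hf : Differentiable ℝ f)
    (hlip : ∀ y z, ‖fderiv ℝ f y - fderiv ℝ f z‖ ≤ C * ‖y - z‖) (a u : E) :
    ‖f (a + u) - f a - fderiv ℝ f a u‖ ≤ C / 2 * ‖u‖ ^ 2 := by
  -- Compare `g t = f (a + t • u) - f a - t • f' a u` with the barrier `C ‖u‖² t² / 2` on `[0, 1]`.
  set g : ℝ → F := fun t ↦ f (a + t • u) - f a - t • fderiv ℝ f a u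
  have hg : ∀ t, HasDerivAt g (fderiv ℝ f (a + t • u) u - fderiv ℝ f a u) t := by
    intro t
    have hline : HasDerivAt (fun t : ℝ ↦ a + t • u) u t := by
      simpa using ((hasDerivAt_id t).smul_const u).const_add a
    exact ((((hf _).hasFDerivAt.comp_hasDerivAt t hline).sub_const (f a)).sub
      ((hasDerivAt_id t).smul_const (fderiv ℝ f a u))).congr_deriv (by simp)
  have hbarrier : ∀ t : ℝ, HasDerivAt (fun t ↦ C / 2 * ‖u‖ ^ 2 * t ^ 2) (C * ‖u‖ ^ 2 * t) t := by
    intro t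
    refine ((hasDerivAt_pow 2 t).const_mul (C / 2 * ‖u‖ ^ 2)).congr_deriv ?_
    norm_num
    ring
  have hbound : ∀ t ∈ Set.Ico (0 : ℝ) 1,
      ‖fderiv ℝ f (a + t • u) u - fderiv ℝ f a u‖ ≤ C * ‖u‖ ^ 2 * t := by
    intro t ht
    calc ‖fderiv ℝ f (a + t • u) u - fderiv ℝ f a u‖
        = ‖(fderiv ℝ f (a + t • u) - fderiv ℝ f a) u‖ := rfl
      _ ≤ ‖fderiv ℝ f (a + t • u) - fderiv ℝ f a‖ * ‖u‖ := ContinuousLinearMap.le_opNorm _ _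
      _ ≤ C * ‖t • u‖ * ‖u‖ := by
        gcongr
        simpa using hlip (a + t • u) a
      _ = C * ‖u‖ ^ 2 * t := by rw [norm_smul, Real.norm_of_nonneg ht.1]; ring
  simpa [g] using image_norm_le_of_norm_deriv_right_le_deriv_boundary
    (fun t _ ↦ (hg t).continuousAt.continuousWithinAt) (fun t _ ↦ (hg t).hasDerivWithinAt)
    (by simp [g]) hbarrier hbound (Set.right_mem_Icc.2 zero_le_one)

end Taylor

namespace EuclideanSpace

variable {ι : Type*} [DecidableEq ι]

theorem toLp_update_eq_add_single (b : EuclideanSpace ℝ ι) (i : ι) (a : ℝ) :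
    WithLp.toLp 2 (Function.update b i a) = b + single i (a - b i) := by
  ext j
  by_cases h : j = i
  · subst h; simp
  · simp [h]

section Fintype

variable [Fintype ι]

theorem sum_single_self (y : EuclideanSpace ℝ ι) : ∑ i, single i (y i) = y := by
  ext j
  simp

theorem sum_norm_single_sq (y : EuclideanSpace ℝ ι) : ∑ i, ‖single i (y i)‖ ^ 2 = ‖y‖ ^ 2 := by
  simp [real_norm_sq_eq]

theorem abs_sub_sub_sum_update_le {v : EuclideanSpace ℝ ι → ℝ} {L : EuclideanSpace ℝ ι →L[ℝ] ℝ}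
    {K : ℝ} {b : EuclideanSpace ℝ ι} (hL : ∀ u, |v (b + u) - v b - L u| ≤ K * ‖u‖ ^ 2)
    (x : EuclideanSpace ℝ ι) :
    |v x - v b - ∑ i, (v (WithLp.toLp 2 (Function.update b i (x i))) - v b)|
      ≤ 2 * K * ‖x - b‖ ^ 2 := by
  set u : ι → EuclideanSpace ℝ ι := fun i ↦ single i ((x - b) i)
  have hupdate : ∀ i, WithLp.toLp 2 (Function.update b i (x i)) = b + u i := fun i ↦ by
    simp [u, toLp_update_eq_add_single]
  have hsplit : v x - v b - ∑ i, (v (WithLp.toLp 2 (Function.update b i (x i))) - v b)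
      = (v (b + (x - b)) - v b - L (x - b)) - ∑ i, (v (b + u i) - v b - L (u i)) := by
    have hL_sum : L (x - b) = ∑ i, L (u i) := by rw [← map_sum, sum_single_self]
    simp only [hupdate, add_sub_cancel, hL_sum, Finset.sum_sub_distrib]
    ring
  calc _ ≤ |v (b + (x - b)) - v b - L (x - b)| + ∑ i, |v (b + u i) - v b - L (u i)| := by
        rw [hsplit]
        grw [abs_sub, Finset.abs_sum_le_sum_abs]
    _ ≤ K * ‖x - b‖ ^ 2 + ∑ i, K * ‖u i‖ ^ 2 := by
        gcongr with i
        exacts [hL _, hL _]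
    _ = 2 * K * ‖x - b‖ ^ 2 := by
        rw [← Finset.mul_sum, sum_norm_single_sq]
        ring

end Fintype

end EuclideanSpace

theorem fastcache_first_order_interaction_recovery_general
    (N : ℕ)
    (v : EuclideanSpace ℝ (Fin N) → ℝ) (C δ : ℝ) (hC : 0 ≤ C)
    (hv : ContDiff ℝ 2 v)
    (hC2 : ∀ z : EuclideanSpace ℝ (Fin N), ‖iteratedFDeriv ℝ 2 v z‖ ≤ C)
    (b x : EuclideanSpace ℝ (Fin N)) (hδ : ‖x - b‖ ≤ δ)
    (I : Fin N → ℝ) (hI : ∀ i, I i = v (WithLp.toLp 2 (Function.update b i (x i))) - v b) :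
    |v x - v b - ∑ i, I i| ≤ C * δ ^ 2 := by
  have htaylor : ∀ u, |v (b + u) - v b - fderiv ℝ v b u| ≤ C / 2 * ‖u‖ ^ 2 := by
    simpa only [Real.norm_eq_abs] using norm_sub_sub_fderiv_le_of_lipschitz_fderiv
      (hv.differentiable two_ne_zero)
      (norm_fderiv_sub_fderiv_le_of_norm_iteratedFDeriv_two_le hv hC2) b
  simp only [hI]
  calc _ ≤ 2 * (C / 2) * ‖x - b‖ ^ 2 := EuclideanSpace.abs_sub_sub_sum_update_le htaylor x
    _ = C * ‖x - b‖ ^ 2 := by ring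
    _ ≤ C * δ ^ 2 := by gcongr

/-- First-order interaction recovery: the first-order Taylor approximation of `v` at the
cached background `b` recovers the sum of singleton Harsanyi interactions up to `O(δ²)`. -/
theorem fastcache_first_order_interaction_recovery
    (N : ℕ) (hN : 0 < N)
    (v : EuclideanSpace ℝ (Fin N) → ℝ) (C δ : ℝ) (hC : 0 ≤ C)
    (hv : ContDiff ℝ 2 v)
    (hC2 : ∀ z : EuclideanSpace ℝ (Fin N), ‖iteratedFDeriv ℝ 2 v z‖ ≤ C)
    (b x : EuclideanSpace ℝ (Fin N)) (hδ : ‖x - b‖ ≤ δ)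
    (I : Fin N → ℝ) (hI : ∀ i, I i = v (WithLp.toLp 2 (Function.update b i (x i))) - v b) :
    |v x - v b - ∑ i, I i| ≤ C * δ ^ 2 :=
  fastcache_first_order_interaction_recovery_general N v C δ hC hv hC2 b x hδ I hI
end

section
/- Let N be a finite type with n = |N| elements and w : Finset N → ℝ. For each S ⊆ N define the Harsanyi interaction I(S) = Σ_{T ⊆ S} (−1)^{|S| − |T|} · (w(T) − w(∅)). Suppose |I(S)| ≤ ε for every subset S with |S| ≥ 2. Then |w(N) − w(∅) − Σ_{i ∈ N} I({i})| ≤ (2^n − n − 1)·ε, where the sum is over all singleton interactions. -/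
/-!
The interactions are the Möbius transform of `T ↦ w T - w ∅` on the Boolean lattice, so summing
them over all subsets of `univ` recovers `w univ - w ∅`; the inversion rests on the alternating
sum `∑_{U ⊆ T ⊆ S} (-1)^(|T|-|U|) = [U = S]`. Removing the order-0 term (which vanishes) and the
singleton terms leaves the `2^n - n - 1` interactions of order at least 2, each bounded by `ε`.
-/

open Finset

section Harsanyi

variable {α R : Type*} [CommRing R]

def harsanyiDividend (f : Finset α → R) (S : Finset α) : R :=
  ∑ T ∈ S.powerset, (-1) ^ (#S - #T) * f T

variable [DecidableEq α]

theorem sum_Icc_neg_one_pow_card_sub {U S : Finset α} (hUS : U ⊆ S) :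
    ∑ T ∈ Icc U S, (-1 : R) ^ (#T - #U) = if U = S then 1 else 0 := by
  have hdisj : ∀ V ∈ (S \ U).powerset, Disjoint U V := fun V hV =>
    disjoint_of_subset_right (mem_powerset.1 hV) disjoint_sdiff
  have hinj : Set.InjOn (U ∪ ·) (S \ U).powerset := fun V hV V' hV' h => by
    rw [← union_sdiff_cancel_left (hdisj V hV), ← union_sdiff_cancel_left (hdisj V' hV')]
    exact congrArg (· \ U) h
  have hsum := congrArg (Int.cast : ℤ → R) (sum_powerset_neg_one_pow_card (x := S \ U))
  push_cast at hsum
  rw [Icc_eq_image_powerset hUS, sum_image hinj, sum_congr rfl fun V hV => by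
    rw [card_union_of_disjoint (hdisj V hV), add_tsub_cancel_left], hsum]
  exact if_congr (by rw [sdiff_eq_empty_iff_subset, Subset.antisymm_iff, and_iff_right hUS]) rfl rfl

theorem sum_powerset_harsanyiDividend (f : Finset α → R) (S : Finset α) :
    ∑ T ∈ S.powerset, harsanyiDividend f T = f S := by
  simp only [harsanyiDividend]
  rw [sum_comm' (t' := S.powerset) (s' := fun U => Icc U S) (fun T U => by
    simp only [mem_powerset, mem_Icc]; grind)]
  rw [sum_congr rfl fun U hU => by rw [← sum_mul, sum_Icc_neg_one_pow_card_sub (mem_powerset.1 hU)]]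
  simp

end Harsanyi

theorem sum_powerset_eq_add_sum_singleton_add {α M : Type*} [AddCommMonoid M]
    (s : Finset α) (g : Finset α → M) :
    ∑ T ∈ s.powerset, g T = g ∅ + ∑ i ∈ s, g {i} + ∑ T ∈ s.powerset with 2 ≤ #T, g T := by
  classical
  have hlow : {T ∈ s.powerset | ¬ 2 ≤ #T} = {∅} ∪ s.powersetCard 1 := by
    rw [← powersetCard_zero s]
    ext T; simp only [mem_filter, mem_powerset, mem_union, mem_powersetCard]; grind
  rw [← sum_filter_not_add_sum_filter _ (2 ≤ #·), hlow,
    sum_union (disjoint_singleton_left.2 (by simp)), sum_singleton, powersetCard_one, sum_map]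
  rfl

theorem card_filter_powerset_two_le_card {α : Type*} (s : Finset α) :
    #{T ∈ s.powerset | 2 ≤ #T} + #s + 1 = 2 ^ #s := by
  have := sum_powerset_eq_add_sum_singleton_add s (fun _ => 1)
  simp only [← card_eq_sum_ones, card_powerset] at this
  omega

/-- Under Assumption A1 (all interactions of order ≥ 2 bounded by ε), the full score
`w(N)` is approximated by the baseline score plus the sum of singleton interactions,
with error at most `(2^n − n − 1)·ε`. -/
theorem fastcache_low_interaction_singleton_approximation
    {N : Type*} [Fintype N] [DecidableEq N]
    (n : ℕ) (hn : n = Fintype.card N)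
    (w : Finset N → ℝ) (I : Finset N → ℝ)
    (hI : ∀ S : Finset N,
      I S = ∑ T ∈ S.powerset, (-1 : ℝ) ^ (S.card - T.card) * (w T - w ∅))
    (ε : ℝ) (hε : ∀ S : Finset N, 2 ≤ S.card → |I S| ≤ ε) :
    |w Finset.univ - w ∅ - ∑ i : N, I {i}| ≤ ((2 : ℝ) ^ n - n - 1) * ε := by
  have hdiv : I = harsanyiDividend (fun T => w T - w ∅) := funext hI
  have hI_empty : I ∅ = 0 := by simp [hI]
  have hdecomp : w univ - w ∅ - ∑ i, I {i} = ∑ T ∈ univ.powerset with 2 ≤ #T, I T := by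
    have h := sum_powerset_eq_add_sum_singleton_add univ I
    rw [hdiv, sum_powerset_harsanyiDividend, ← hdiv, hI_empty] at h
    rw [h]; ring
  have hcard : (#{T ∈ (univ : Finset N).powerset | 2 ≤ #T} : ℝ) = 2 ^ n - n - 1 := by
    have h := card_filter_powerset_two_le_card (univ : Finset N)
    rw [card_univ, ← hn] at h
    rw [sub_sub, eq_sub_iff_add_eq, ← add_assoc]
    exact_mod_cast h
  rw [hdecomp, ← hcard, ← nsmul_eq_mul]
  exact (abs_sum_le_sum_abs _ _).trans
    (sum_le_card_nsmul _ _ _ fun T hT => hε T (mem_filter.1 hT).2)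
end
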